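/- For 1 ≤ i < j ≤ n-2, the identity x_{jn}(f_i - x_{in}y_n) - x_{in}(f_j - x_{jn}y_n) = -Σ_{r=1}^{i-1} y_r Φ_{rijn} + Σ_{r=i+1}^{j-1} y_r Φ_{irjn} - Σ_{r=j+1}^{n-1} y_r Φ_{ijrn} - x_{ij} f_n holds in the polynomial ring. -/

import Mathlib

open MvPolynomial Finset

/-- The variable `x_{ab}` of the generic skew-symmetric matrix, with the
convention `x_{ba} = -x_{ab}` and `x_{aa} = 0`. -/
noncomputable def xv (K : Type*) [CommRing K] (a b : ℕ) :
    MvPolynomial ((ℕ × ℕ) ⊕ ℕ) K :=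
  if a < b then X (Sum.inl (a, b)) else if b < a then -X (Sum.inl (b, a)) else 0

/-- The variable `y_r`. -/
noncomputable def yv (K : Type*) [CommRing K] (r : ℕ) :
    MvPolynomial ((ℕ × ℕ) ⊕ ℕ) K :=
  X (Sum.inr r)

/-- The Pfaffian `Φ_{abcd} = x_{ab}x_{cd} - x_{ac}x_{bd} + x_{ad}x_{bc}`. -/
noncomputable def Phi (K : Type*) [CommRing K] (a b c d : ℕ) :
    MvPolynomial ((ℕ × ℕ) ⊕ ℕ) K :=
  xv K a b * xv K c d - xv K a c * xv K b d + xv K a d * xv K b c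

/-- `f_i = Σ_{r ≠ i} x_{ir} y_r`, the `i`-th entry of the product of the
generic `n × n` skew-symmetric matrix with the column vector `(y_1, …, y_n)ᵀ`
(the term `r = i` contributes `x_{ii} y_i = 0`). -/
noncomputable def fpoly (K : Type*) [CommRing K] (n i : ℕ) :
    MvPolynomial ((ℕ × ℕ) ⊕ ℕ) K :=
  ∑ r ∈ Finset.Icc 1 n, xv K i r * yv K r

lemma xv_lt (K : Type*) [CommRing K] {a b : ℕ} (h : a < b) :
    xv K a b = X (Sum.inl (a, b)) := if_pos h

lemma xv_gt (K : Type*) [CommRing K] {a b : ℕ} (h : b < a) :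
    xv K a b = -X (Sum.inl (b, a)) := by
  unfold xv; rw [if_neg (by omega), if_pos h]

lemma xv_self (K : Type*) [CommRing K] (a : ℕ) : xv K a a = 0 := by
  unfold xv; rw [if_neg (by omega), if_neg (by omega)]

lemma split_sum' {M : Type*} [AddCommMonoid M] (n i j : ℕ)
    (h1 : 1 ≤ i) (hij : i < j) (hjn : j + 2 ≤ n) (g : ℕ → M) :
    ∑ r ∈ Finset.Icc 1 n, g r =
      (∑ r ∈ Finset.Icc 1 (i - 1), g r) + g i + (∑ r ∈ Finset.Icc (i + 1) (j - 1), g r)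
        + g j + (∑ r ∈ Finset.Icc (j + 1) (n - 1), g r) + g n := by
  have e0 : ∀ a b : ℕ, Finset.Icc (a+1) b = Finset.Ioc a b := fun a b => by
    ext x; simp only [Finset.mem_Icc, Finset.mem_Ioc]; omega
  have e1 : Finset.Icc 1 n = Finset.Ioc 0 n := e0 0 n
  have s1 : Finset.Ioc (i-1) i = {i} := by ext x; simp [Finset.mem_Ioc]; omega
  have s2 : Finset.Ioc (j-1) j = {j} := by ext x; simp [Finset.mem_Ioc]; omega
  have s3 : Finset.Ioc (n-1) n = {n} := by ext x; simp [Finset.mem_Ioc]; omega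
  rw [e1,
    ← Finset.sum_Ioc_consecutive g (show (0:ℕ) ≤ i-1 by omega) (show i-1 ≤ n by omega),
    ← Finset.sum_Ioc_consecutive g (show i-1 ≤ i by omega) (show i ≤ n by omega),
    ← Finset.sum_Ioc_consecutive g (show i ≤ j-1 by omega) (show j-1 ≤ n by omega),
    ← Finset.sum_Ioc_consecutive g (show j-1 ≤ j by omega) (show j ≤ n by omega),
    ← Finset.sum_Ioc_consecutive g (show j ≤ n-1 by omega) (show n-1 ≤ n by omega),
    s1, s2, s3, Finset.sum_singleton, Finset.sum_singleton, Finset.sum_singleton,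
    ← e0 0 (i-1), ← e0 i (j-1), ← e0 j (n-1)]
  abel

/-- For `1 ≤ i < j ≤ n-2`:
`x_{jn}(f_i - x_{in}y_n) - x_{in}(f_j - x_{jn}y_n)
 = -Σ_{r=1}^{i-1} y_r Φ_{rijn} + Σ_{r=i+1}^{j-1} y_r Φ_{irjn}
   - Σ_{r=j+1}^{n-1} y_r Φ_{ijrn} - x_{ij} f_n`. -/
theorem spoly_fi_fj (K : Type*) [CommRing K] (n i j : ℕ)
    (h1 : 1 ≤ i) (hij : i < j) (hjn : j ≤ n - 2) :
    xv K j n * (fpoly K n i - xv K i n * yv K n)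
      - xv K i n * (fpoly K n j - xv K j n * yv K n) =
      -∑ r ∈ Finset.Icc 1 (i - 1), yv K r * Phi K r i j n
      + ∑ r ∈ Finset.Icc (i + 1) (j - 1), yv K r * Phi K i r j n
      - ∑ r ∈ Finset.Icc (j + 1) (n - 1), yv K r * Phi K i j r n
      - xv K i j * fpoly K n n := by
  have hn : j + 2 ≤ n := by omega
  set g : ℕ → MvPolynomial ((ℕ × ℕ) ⊕ ℕ) K :=
    fun r => xv K j n * (xv K i r * yv K r) - xv K i n * (xv K j r * yv K r) with hg
  -- LHS
  have hL : xv K j n * (fpoly K n i - xv K i n * yv K n)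
      - xv K i n * (fpoly K n j - xv K j n * yv K n)
      = ∑ r ∈ Finset.Icc 1 n, g r := by
    rw [Finset.sum_sub_distrib, ← Finset.mul_sum, ← Finset.mul_sum, ← fpoly, ← fpoly]
    ring
  rw [hL, split_sum' n i j h1 hij hn g, fpoly, Finset.mul_sum,
    split_sum' n i j h1 hij hn (fun r => xv K i j * (xv K n r * yv K r))]
  have e1 : ∑ r ∈ Finset.Icc 1 (i-1), g r
      = ∑ r ∈ Finset.Icc 1 (i-1),
          (-(yv K r * Phi K r i j n) - xv K i j * (xv K n r * yv K r)) := by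
    refine Finset.sum_congr rfl fun r hr => ?_
    rw [Finset.mem_Icc] at hr
    rw [hg]
    simp only [Phi]
    rw [xv_lt K (show j < n by omega), xv_lt K (show i < n by omega),
      xv_gt K (show r < i by omega), xv_gt K (show r < j by omega),
      xv_lt K (show r < i by omega), xv_lt K (show r < j by omega),
      xv_lt K (show r < n by omega), xv_lt K (show i < j by omega),
      xv_gt K (show r < n by omega)]
    ring
  have e2 : ∑ r ∈ Finset.Icc (i+1) (j-1), g r
      = ∑ r ∈ Finset.Icc (i+1) (j-1),
          (yv K r * Phi K i r j n - xv K i j * (xv K n r * yv K r)) := by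
    refine Finset.sum_congr rfl fun r hr => ?_
    rw [Finset.mem_Icc] at hr
    rw [hg]
    simp only [Phi]
    rw [xv_lt K (show j < n by omega), xv_lt K (show i < n by omega),
      xv_lt K (show i < r by omega), xv_gt K (show r < j by omega),
      xv_lt K (show r < j by omega), xv_lt K (show r < n by omega),
      xv_lt K (show i < j by omega), xv_gt K (show r < n by omega)]
    ring
  have e3 : ∑ r ∈ Finset.Icc (j+1) (n-1), g r
      = ∑ r ∈ Finset.Icc (j+1) (n-1),
          (-(yv K r * Phi K i j r n) - xv K i j * (xv K n r * yv K r)) := by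
    refine Finset.sum_congr rfl fun r hr => ?_
    rw [Finset.mem_Icc] at hr
    rw [hg]
    simp only [Phi]
    rw [xv_lt K (show j < n by omega), xv_lt K (show i < n by omega),
      xv_lt K (show i < r by omega), xv_lt K (show j < r by omega),
      xv_lt K (show r < n by omega), xv_lt K (show i < j by omega),
      xv_gt K (show r < n by omega)]
    ring
  have ei : g i = -(xv K i j * (xv K n i * yv K i)) := by
    rw [hg]
    simp only [xv_self]
    rw [xv_lt K (show i < n by omega), xv_gt K (show i < j by omega),
      xv_lt K (show i < j by omega), xv_gt K (show i < n by omega)]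
    ring
  have ej : g j = -(xv K i j * (xv K n j * yv K j)) := by
    rw [hg]
    simp only [xv_self]
    rw [xv_lt K (show j < n by omega), xv_lt K (show i < j by omega),
      xv_gt K (show j < n by omega)]
    ring
  have en : g n = -(xv K i j * (xv K n n * yv K n)) := by
    rw [hg]; simp only [xv_self]; ring
  rw [e1, e2, e3, ei, ej, en]
  simp only [Finset.sum_sub_distrib, Finset.sum_neg_distrib]
  abel
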